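/- Let G* be a graph of maximum spectral radius among connected graphs on n vertices with connectivity at most k and minimum degree at least k, let S be a k-vertex cut, and let G_1, G_2 be the two components of G* − S. Then for i = 1, 2, the subgraph of G* induced by V(G_i) ∪ S is a complete graph. -/

import Mathlib

open Finset

noncomputable def specRad {n : ℕ} (G : SimpleGraph (Fin n)) : ℝ :=
  letI : DecidableRel G.Adj := Classical.decRel _
  sSup (spectrum ℝ (G.adjMatrix ℝ))

noncomputable def adjMat {n : ℕ} (G : SimpleGraph (Fin n)) : Matrix (Fin n) (Fin n) ℝ :=
  letI : DecidableRel G.Adj := Classical.decRel _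
  G.adjMatrix ℝ

noncomputable def minDeg {n : ℕ} (G : SimpleGraph (Fin n)) : ℕ :=
  letI : DecidableRel G.Adj := Classical.decRel _
  G.minDegree

/-- `x` is a Perron vector of `G`: a positive unit eigenvector for the spectral radius. -/
def IsPerronVector {n : ℕ} (G : SimpleGraph (Fin n)) (x : Fin n → ℝ) : Prop :=
  (∀ i, 0 < x i) ∧ (∑ i, x i ^ 2 = 1) ∧ (adjMat G).mulVec x = specRad G • x

/-- Removing the vertex set `S` disconnects `G`. -/
def Disconnects {n : ℕ} (G : SimpleGraph (Fin n)) (S : Finset (Fin n)) : Prop :=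
  ¬ (G.induce ((↑(Sᶜ) : Set (Fin n)))).Preconnected

/-- `G` is `m`-connected: `G` is the complete graph on `m+1` vertices, or `G` has at least
`m+2` vertices and no vertex cut of size at most `m-1`. -/
def IsKConnected {n : ℕ} (G : SimpleGraph (Fin n)) (m : ℕ) : Prop :=
  (n = m + 1 ∧ G = ⊤) ∨
    (m + 2 ≤ n ∧ ∀ S : Finset (Fin n), S.card ≤ m - 1 → ¬ Disconnects G S)

/-- The graph `K_k + (K_{δ-k+1} ∪ K_{n-δ-1})`: vertices `0,…,k-1` are joined to everything,
vertices `k,…,δ` form one clique and vertices `δ+1,…,n-1` the other. -/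
def Gkdn (k δ n : ℕ) : SimpleGraph (Fin n) where
  Adj a b := a ≠ b ∧ ((a : ℕ) < k ∨ (b : ℕ) < k ∨ ((a : ℕ) ≤ δ ∧ (b : ℕ) ≤ δ) ∨
    (δ < (a : ℕ) ∧ δ < (b : ℕ)))
  symm := ⟨by intro a b h; exact ⟨h.1.symm, by tauto⟩⟩
  loopless := ⟨by intro a h; exact h.1 rfl⟩

section SpectralAux

open Matrix
open scoped Classical

variable {n : ℕ}

lemma adjMat_apply (G : SimpleGraph (Fin n)) (i j : Fin n) :
    adjMat G i j = if G.Adj i j then 1 else 0 := by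
  simp [adjMat, SimpleGraph.adjMatrix]

lemma adjMat_nonneg (G : SimpleGraph (Fin n)) (i j : Fin n) : 0 ≤ adjMat G i j := by
  rw [adjMat_apply]; split <;> norm_num

lemma adjMat_isHermitian (G : SimpleGraph (Fin n)) : (adjMat G).IsHermitian := by
  ext i j
  simp [Matrix.conjTranspose_apply, adjMat_apply, SimpleGraph.adj_comm]

lemma specRad_eq (G : SimpleGraph (Fin n)) :
    specRad G = sSup (spectrum ℝ (adjMat G)) := rfl

lemma spectrum_eq (G : SimpleGraph (Fin n)) :
    spectrum ℝ (adjMat G) = Set.range (adjMat_isHermitian G).eigenvalues :=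
  (adjMat_isHermitian G).spectrum_real_eq_range_eigenvalues

lemma eigenvalues_le_specRad (G : SimpleGraph (Fin n)) (i : Fin n) :
    (adjMat_isHermitian G).eigenvalues i ≤ specRad G := by
  rw [specRad_eq, spectrum_eq]
  exact le_csSup ((Set.finite_range _).bddAbove) ⟨i, rfl⟩

lemma specRad_mem (G : SimpleGraph (Fin n)) (hn : 0 < n) :
    ∃ i, (adjMat_isHermitian G).eigenvalues i = specRad G := by
  have : Nonempty (Fin n) := ⟨⟨0, hn⟩⟩
  have h := (Set.range_nonempty (adjMat_isHermitian G).eigenvalues).csSup_mem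
    (Set.finite_range _)
  rw [specRad_eq, spectrum_eq]
  exact h

lemma sub_posSemidef (G : SimpleGraph (Fin n)) :
    Matrix.PosSemidef (specRad G • (1 : Matrix (Fin n) (Fin n) ℝ) - adjMat G) := by
  have hA := adjMat_isHermitian G
  set U : Matrix (Fin n) (Fin n) ℝ := (hA.eigenvectorUnitary : Matrix (Fin n) (Fin n) ℝ) with hUdef
  have hU : U * star U = 1 := (Matrix.mem_unitaryGroup_iff).mp hA.eigenvectorUnitary.2
  have key : specRad G • (1 : Matrix (Fin n) (Fin n) ℝ) - adjMat G
      = U * Matrix.diagonal (fun i => specRad G - hA.eigenvalues i) * star U := by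
    have h1 : specRad G • (1 : Matrix (Fin n) (Fin n) ℝ)
        = U * (specRad G • (1 : Matrix (Fin n) (Fin n) ℝ)) * star U := by
      rw [Matrix.mul_smul, Matrix.mul_one, Matrix.smul_mul, hU]
    have h2 : specRad G • (1 : Matrix (Fin n) (Fin n) ℝ)
        - Matrix.diagonal (RCLike.ofReal ∘ hA.eigenvalues)
        = Matrix.diagonal (fun i => specRad G - hA.eigenvalues i) := by
      ext i j
      by_cases h : i = j <;>
        simp [h, Matrix.diagonal, Matrix.one_apply, Matrix.smul_apply]
    conv_lhs => rw [hA.spectral_theorem, Unitary.conjStarAlgAut_apply, ← hUdef, h1]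
    rw [← Matrix.sub_mul, ← Matrix.mul_sub, h2]
  rw [key]
  exact (Matrix.posSemidef_diagonal_iff.mpr
    (fun i => sub_nonneg.mpr (eigenvalues_le_specRad G i))).mul_mul_conjTranspose_same U

lemma rayleigh_le (G : SimpleGraph (Fin n)) (v : Fin n → ℝ) :
    v ⬝ᵥ (adjMat G *ᵥ v) ≤ specRad G * (∑ i, v i ^ 2) := by
  have h := (sub_posSemidef G).dotProduct_mulVec_nonneg v
  simp only [star_trivial, Matrix.sub_mulVec, dotProduct_sub, Matrix.smul_mulVec,
    Matrix.one_mulVec, dotProduct_smul, smul_eq_mul] at h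
  have hvv : v ⬝ᵥ v = ∑ i, v i ^ 2 := by simp [dotProduct, pow_two]
  rw [hvv] at h
  linarith

lemma exists_top_eigenvector (G : SimpleGraph (Fin n)) (hn : 0 < n) :
    ∃ x : Fin n → ℝ, (∑ i, x i ^ 2) = 1 ∧ adjMat G *ᵥ x = specRad G • x := by
  obtain ⟨i, hi⟩ := specRad_mem G hn
  have hA := adjMat_isHermitian G
  refine ⟨⇑(hA.eigenvectorBasis i), ?_, ?_⟩
  · have hnorm : ‖hA.eigenvectorBasis i‖ = 1 := hA.eigenvectorBasis.orthonormal.1 i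
    have h2 : ‖hA.eigenvectorBasis i‖ ^ 2 = 1 := by rw [hnorm]; norm_num
    rw [EuclideanSpace.norm_eq] at h2
    rw [Real.sq_sqrt (by positivity)] at h2
    simpa [sq_abs] using h2
  · rw [hA.mulVec_eigenvectorBasis, hi]

lemma walk_zero {G : SimpleGraph (Fin n)} {y : Fin n → ℝ}
    (hz : ∀ u v, G.Adj u v → y u = 0 → y v = 0) {u v : Fin n} (p : G.Walk u v)
    (h0 : y u = 0) : y v = 0 := by
  induction p with
  | nil => exact h0
  | cons h p ih => exact ih (hz _ _ h h0)

lemma exists_perron (G : SimpleGraph (Fin n)) (hconn : G.Connected) (hn : 0 < n) :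
    ∃ y : Fin n → ℝ, (∀ i, 0 < y i) ∧ (∑ i, y i ^ 2) = 1 ∧
      adjMat G *ᵥ y = specRad G • y := by
  obtain ⟨x, hx1, hx2⟩ := exists_top_eigenvector G hn
  set y : Fin n → ℝ := fun i => |x i| with hydef
  have hy2 : (∑ i, y i ^ 2) = 1 := by simpa [hydef, sq_abs] using hx1
  have hxx : x ⬝ᵥ x = 1 := by simpa [dotProduct, pow_two] using hx1
  have hxAx : x ⬝ᵥ (adjMat G *ᵥ x) = specRad G := by
    rw [hx2, dotProduct_smul, smul_eq_mul, hxx, mul_one]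
  have hle : specRad G ≤ y ⬝ᵥ (adjMat G *ᵥ y) := by
    rw [← hxAx]
    simp only [dotProduct, Matrix.mulVec, Finset.mul_sum]
    refine Finset.sum_le_sum fun i _ => Finset.sum_le_sum fun j _ => ?_
    calc x i * (adjMat G i j * x j) ≤ |x i * (adjMat G i j * x j)| := le_abs_self _
      _ = y i * (adjMat G i j * y j) := by
          rw [abs_mul, abs_mul, abs_of_nonneg (adjMat_nonneg G i j)]
  have hge : y ⬝ᵥ (adjMat G *ᵥ y) ≤ specRad G := by
    have := rayleigh_le G y
    rwa [hy2, mul_one] at this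
  have heq : y ⬝ᵥ (adjMat G *ᵥ y) = specRad G := le_antisymm hge hle
  have hzero : (specRad G • (1 : Matrix (Fin n) (Fin n) ℝ) - adjMat G) *ᵥ y = 0 := by
    refine ((sub_posSemidef G).dotProduct_mulVec_zero_iff y).mp ?_
    simp only [star_trivial, Matrix.sub_mulVec, dotProduct_sub, Matrix.smul_mulVec,
      Matrix.one_mulVec, dotProduct_smul, smul_eq_mul]
    have hyy : y ⬝ᵥ y = 1 := by simpa [dotProduct, pow_two] using hy2
    rw [hyy, heq]; ring
  have heig : adjMat G *ᵥ y = specRad G • y := by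
    have h := hzero
    rw [Matrix.sub_mulVec, Matrix.smul_mulVec, Matrix.one_mulVec, sub_eq_zero] at h
    exact h.symm
  have hnn : ∀ i, 0 ≤ y i := fun i => abs_nonneg _
  have hzadj : ∀ u v, G.Adj u v → y u = 0 → y v = 0 := by
    intro u v huv h0
    have h1 : (adjMat G *ᵥ y) u = 0 := by rw [heig]; simp [h0]
    have h1' : (∑ j, adjMat G u j * y j) = 0 := by
      simpa [Matrix.mulVec, dotProduct] using h1
    have := (Finset.sum_eq_zero_iff_of_nonneg
      (fun j _ => mul_nonneg (adjMat_nonneg G u j) (hnn j))).mp h1' v (Finset.mem_univ v)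
    rwa [adjMat_apply, if_pos huv, one_mul] at this
  refine ⟨y, ?_, hy2, heig⟩
  intro i
  rcases (hnn i).lt_or_eq with h | h
  · exact h
  · exfalso
    have hall : ∀ j, y j = 0 := fun j =>
      (hconn.preconnected i j).elim fun p => walk_zero hzadj p h.symm
    rw [Finset.sum_eq_zero (fun j _ => by rw [hall j]; ring)] at hy2
    exact zero_ne_one hy2

lemma reachable_of_adj_reachable {V : Type*} {H H' : SimpleGraph V}
    (h : ∀ u v, H'.Adj u v → H.Reachable u v) {u v : V} (p : H'.Walk u v) :
    H.Reachable u v := by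
  induction p with
  | nil => exact SimpleGraph.Reachable.refl _
  | cons ha p ih => exact (h _ _ ha).trans ih

end SpectralAux

open Matrix
open scoped Classical

set_option maxHeartbeats 1000000 in
theorem maximizer_components_clique {n k : ℕ} (hn : k + 2 ≤ n)
    (Gs : SimpleGraph (Fin n)) (hconn : Gs.Connected) (hκ : ¬ IsKConnected Gs (k + 1))
    (hδ : k ≤ minDeg Gs)
    (hmax : ∀ G : SimpleGraph (Fin n), G.Connected → ¬ IsKConnected G (k + 1) →
      k ≤ minDeg G → specRad G ≤ specRad Gs)
    (S : Finset (Fin n)) (hS : S.card = k) (hcut : Disconnects Gs S)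
    (htwo : ∃ C₁ C₂ : (Gs.induce ((↑(Sᶜ) : Set (Fin n)))).ConnectedComponent,
      C₁ ≠ C₂ ∧ ∀ C, C = C₁ ∨ C = C₂) :
    ∀ (C : (Gs.induce ((↑(Sᶜ) : Set (Fin n)))).ConnectedComponent) (a b : Fin n),
      (a ∈ S ∨ ∃ ha : a ∈ ((↑(Sᶜ) : Set (Fin n))),
        (Gs.induce ((↑(Sᶜ) : Set (Fin n)))).connectedComponentMk ⟨a, ha⟩ = C) →
      (b ∈ S ∨ ∃ hb : b ∈ ((↑(Sᶜ) : Set (Fin n))),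
        (Gs.induce ((↑(Sᶜ) : Set (Fin n)))).connectedComponentMk ⟨b, hb⟩ = C) →
      a ≠ b → Gs.Adj a b := by
  intro C a b ha hb hab
  by_contra hadj
  have hnpos : 0 < n := by omega
  haveI : Nonempty (Fin n) := ⟨⟨0, hnpos⟩⟩
  set G' : SimpleGraph (Fin n) := Gs ⊔ SimpleGraph.fromEdgeSet {s(a, b)} with hG'def
  have hGle : Gs ≤ G' := le_sup_left
  have hadj' : ∀ u v, G'.Adj u v ↔ Gs.Adj u v ∨ ((u = a ∧ v = b) ∨ (u = b ∧ v = a)) := by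
    intro u v
    rw [hG'def, SimpleGraph.sup_adj, SimpleGraph.fromEdgeSet_adj, Set.mem_singleton_iff,
      Sym2.eq_iff]
    constructor
    · rintro (h | ⟨h, -⟩)
      · exact Or.inl h
      · exact Or.inr h
    · rintro (h | h)
      · exact Or.inl h
      · refine Or.inr ⟨h, ?_⟩
        rcases h with ⟨rfl, rfl⟩ | ⟨rfl, rfl⟩
        · exact hab
        · exact hab.symm
  have hconn' : G'.Connected := hconn.mono hGle
  -- minimum degree
  have hmindeg : k ≤ minDeg G' := by
    unfold minDeg at hδ ⊢
    letI iGs : DecidableRel Gs.Adj := Classical.decRel _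
    letI iG' : DecidableRel G'.Adj := Classical.decRel _
    apply SimpleGraph.le_minDegree_of_forall_le_degree
    intro v
    refine le_trans (le_trans hδ (Gs.minDegree_le_degree v)) ?_
    apply Finset.card_le_card
    intro u hu
    rw [SimpleGraph.mem_neighborFinset] at hu ⊢
    exact hGle hu
  -- S still disconnects G'
  have hreach : ∀ u v : ((↑(Sᶜ) : Set (Fin n))),
      (G'.induce ((↑(Sᶜ) : Set (Fin n)))).Reachable u v →
      (Gs.induce ((↑(Sᶜ) : Set (Fin n)))).Reachable u v := by
    intro u v hr
    refine hr.elim fun p => reachable_of_adj_reachable ?_ p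
    intro u' v' huv
    have huv' : G'.Adj ↑u' ↑v' := huv
    rcases (hadj' _ _).mp huv' with h | h
    · exact SimpleGraph.Adj.reachable h
    · -- the new edge: both endpoints are a, b, which lie in C
      have hanS : (↑u' : Fin n) ∉ S ∧ (↑v' : Fin n) ∉ S := by
        constructor
        · exact Finset.mem_compl.mp (Finset.mem_coe.mp u'.2)
        · exact Finset.mem_compl.mp (Finset.mem_coe.mp v'.2)
      have haS : a ∉ S := by
        rcases h with ⟨h1, h2⟩ | ⟨h1, h2⟩
        · rw [← h1]; exact hanS.1
        · rw [← h2]; exact hanS.2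
      have hbS : b ∉ S := by
        rcases h with ⟨h1, h2⟩ | ⟨h1, h2⟩
        · rw [← h2]; exact hanS.2
        · rw [← h1]; exact hanS.1
      have haC := ha.resolve_left haS
      have hbC := hb.resolve_left hbS
      obtain ⟨haV, hCa⟩ := haC
      obtain ⟨hbV, hCb⟩ := hbC
      have hab' : (Gs.induce ((↑(Sᶜ) : Set (Fin n)))).Reachable ⟨a, haV⟩ ⟨b, hbV⟩ := by
        rw [← SimpleGraph.ConnectedComponent.eq]
        rw [hCa, hCb]
      rcases h with ⟨h1, h2⟩ | ⟨h1, h2⟩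
      · have hu : u' = ⟨a, haV⟩ := Subtype.ext h1
        have hv : v' = ⟨b, hbV⟩ := Subtype.ext h2
        rw [hu, hv]; exact hab'
      · have hu : u' = ⟨b, hbV⟩ := Subtype.ext h1
        have hv : v' = ⟨a, haV⟩ := Subtype.ext h2
        rw [hu, hv]; exact hab'.symm
  have hdisc' : Disconnects G' S := by
    intro hpre
    exact hcut fun u v => hreach u v (hpre u v)
  have hnotk : ¬ IsKConnected G' (k + 1) := by
    rintro (⟨hn1, htop⟩ | ⟨-, hall⟩)
    · apply hdisc'
      rw [htop]
      intro u v
      by_cases h : u = v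
      · rw [h]
      · refine SimpleGraph.Adj.reachable ?_
        exact fun hh => h (Subtype.ext hh)
    · exact hall S (by rw [hS]; simp) hdisc'
  -- spectral radius strictly increases
  obtain ⟨y, hypos, hy2, heig⟩ := exists_perron Gs hconn hnpos
  have hyAy : y ⬝ᵥ (adjMat Gs *ᵥ y) = specRad Gs := by
    rw [heig, dotProduct_smul, smul_eq_mul]
    have : y ⬝ᵥ y = 1 := by simpa [dotProduct, pow_two] using hy2
    rw [this, mul_one]
  have hA' : ∀ u v, adjMat G' u v
      = adjMat Gs u v + (if (u = a ∧ v = b) ∨ (u = b ∧ v = a) then (1:ℝ) else 0) := by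
    intro u v
    rw [adjMat_apply, adjMat_apply]
    by_cases h2 : (u = a ∧ v = b) ∨ (u = b ∧ v = a)
    · have hG'uv : G'.Adj u v := (hadj' u v).mpr (Or.inr h2)
      have hGsuv : ¬ Gs.Adj u v := by
        rcases h2 with ⟨rfl, rfl⟩ | ⟨rfl, rfl⟩
        · exact hadj
        · exact fun h => hadj h.symm
      rw [if_pos hG'uv, if_neg hGsuv, if_pos h2]; norm_num
    · by_cases h1 : Gs.Adj u v
      · rw [if_pos ((hadj' u v).mpr (Or.inl h1)), if_pos h1, if_neg h2]; norm_num
      · rw [if_neg (fun h => ((hadj' u v).mp h).elim h1 h2), if_neg h1, if_neg h2]; norm_num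
  have hsplit : y ⬝ᵥ (adjMat G' *ᵥ y) = y ⬝ᵥ (adjMat Gs *ᵥ y)
      + ∑ i, ∑ j, y i * ((if (i = a ∧ j = b) ∨ (i = b ∧ j = a) then (1:ℝ) else 0) * y j) := by
    simp only [dotProduct, Matrix.mulVec, Finset.mul_sum]
    rw [← Finset.sum_add_distrib]
    refine Finset.sum_congr rfl fun i _ => ?_
    rw [← Finset.sum_add_distrib]
    refine Finset.sum_congr rfl fun j _ => ?_
    rw [hA' i j]; ring
  have hE : (∑ i, ∑ j, y i * ((if (i = a ∧ j = b) ∨ (i = b ∧ j = a) then (1:ℝ) else 0) * y j))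
      = y a * y b + y b * y a := by
    have hinner : ∀ i, (∑ j, y i * ((if (i = a ∧ j = b) ∨ (i = b ∧ j = a) then (1:ℝ) else 0) * y j))
        = (if i = a then y i * y b else 0) + (if i = b then y i * y a else 0) := by
      intro i
      have h1 : ∀ j, y i * ((if (i = a ∧ j = b) ∨ (i = b ∧ j = a) then (1:ℝ) else 0) * y j)
          = (if j = b then (if i = a then y i * y b else 0) else 0)
            + (if j = a then (if i = b then y i * y a else 0) else 0) := by
        intro j
        by_cases hja : j = a <;> by_cases hjb : j = b <;>
          by_cases hia : i = a <;> by_cases hib : i = b <;>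
          simp_all <;> ring
      rw [Finset.sum_congr rfl fun j _ => h1 j, Finset.sum_add_distrib,
        Finset.sum_ite_eq' Finset.univ b, Finset.sum_ite_eq' Finset.univ a]
      simp
    rw [Finset.sum_congr rfl fun i _ => hinner i, Finset.sum_add_distrib,
      Finset.sum_ite_eq' Finset.univ a, Finset.sum_ite_eq' Finset.univ b]
    simp
  have hrq : y ⬝ᵥ (adjMat G' *ᵥ y) ≤ specRad G' := by
    have := rayleigh_le G' y
    rwa [hy2, mul_one] at this
  have hlt : specRad Gs < specRad G' := by
    have hpos : 0 < y a * y b := mul_pos (hypos a) (hypos b)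
    have := hrq
    rw [hsplit, hyAy, hE] at this
    linarith
  have := hmax G' hconn' hnotk hmindeg
  linarith
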